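/- arXiv:2605.28738 — 7 statements merged into one kernel-verified Lean document; each statement's English description precedes it below -/
import Mathlib

section
/- There does not exist a complex d×n equiangular tight frame with d² − d + 1 < n < d². -/
/-!
Let `x₁, …, xₙ` be the columns of `X` and `T A = (xₗᴴ A xₗ)ₗ`. Under the trace form the
projections `xₗxₗᴴ` have Gram matrix `(1 - α²)I + α²J`, which is invertible, so `T` is onto `ℂⁿ`
and `ker T` has dimension `d² - n ≤ d - 2`. Hence some `v ≠ 0` is orthogonal to `x₁` and satisfies
`x₁ᴴ A v = 0` on `ker T`, i.e. `v x₁ᴴ` is trace-orthogonal to `ker T`. For such a matrix, inverting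
the Gram matrix expresses `trace (K v x₁ᴴ)` through `T K` and `T (v x₁ᴴ)`; taking `K = x₁vᴴ` yields
`1 - α² = α²β`. Together with `β = 1 + (n - 1)α²` this gives `β² = n`, and `βd = n` forces `n = d²`.
-/

open Matrix

/-- `X` is a complex `d × n` equiangular tight frame: there exist `α, β > 0` such that
every diagonal entry of `XᴴX` equals `1`, the absolute value of every off-diagonal entry
of `XᴴX` equals `α`, and `XXᴴ = β I`. -/
def IsETF {d n : ℕ} (X : Matrix (Fin d) (Fin n) ℂ) : Prop :=
  ∃ α β : ℝ, 0 < α ∧ 0 < β ∧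
    (∀ j, (Xᴴ * X) j j = 1) ∧
    (∀ j k, j ≠ k → ‖(Xᴴ * X) j k‖ = α) ∧
    X * Xᴴ = (β : ℂ) • (1 : Matrix (Fin d) (Fin d) ℂ)


lemma trace_mul_vecMulVec {m R : Type*} [Fintype m] [CommSemiring R] (A : Matrix m m R)
    (u w : m → R) : trace (A * vecMulVec u w) = w ⬝ᵥ A *ᵥ u := by
  rw [mul_vecMulVec, trace_vecMulVec, dotProduct_comm]

lemma sum_ite_mul_eq {ι R : Type*} [Fintype ι] [DecidableEq ι] [CommRing R] (j : ι)
    (f : ι → R) (a : R) :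
    ∑ k, (if j = k then 1 else a) * f k = (1 - a) * f j + a * ∑ k, f k := by
  have hsplit : ∀ k,
      (if j = k then 1 else a) * f k = a * f k + if j = k then (1 - a) * f k else 0 := by
    intro k; split_ifs <;> ring
  simp only [hsplit, Finset.sum_add_distrib, Finset.sum_ite_eq, Finset.mem_univ, if_true,
    Finset.mul_sum]
  ring

lemma exists_ne_zero_forall_dotProduct_mulVec_eq_zero {m K : Type*} [Fintype m] [Field K]
    (W : Submodule K (Matrix m m K)) (x : m → K) (hW : Module.finrank K W < Fintype.card m) :
    ∃ v ≠ 0, ∀ A ∈ W, x ⬝ᵥ A *ᵥ v = 0 := by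
  let L : (m → K) →ₗ[K] Module.Dual K W :=
    LinearMap.mk₂ K (fun v A => x ⬝ᵥ (A : Matrix m m K) *ᵥ v)
      (by simp [mulVec_add, dotProduct_add]) (by simp [mulVec_smul, dotProduct_smul])
      (by simp [add_mulVec, dotProduct_add]) (by simp [smul_mulVec, dotProduct_smul])
  have hL : LinearMap.ker L ≠ ⊥ := L.ker_ne_bot_of_finrank_lt <| by
    rwa [Subspace.dual_finrank_eq, Module.finrank_fintype_fun_eq_card]
  obtain ⟨v, hv, hv0⟩ := (Submodule.ne_bot_iff _).mp hL
  exact ⟨v, hv0, fun A hA => LinearMap.congr_fun hv ⟨A, hA⟩⟩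

section DiagCompression

variable {m n R : Type*} [Fintype m] [CommRing R] [StarRing R]

def diagCompression (X : Matrix m n R) : Matrix m m R →ₗ[R] n → R where
  toFun A := (Xᴴ * A * X).diag
  map_add' A B := by simp [Matrix.mul_add, Matrix.add_mul]
  map_smul' c A := by simp

lemma diagCompression_apply (X : Matrix m n R) (A : Matrix m m R) :
    diagCompression X A = (Xᴴ * A * X).diag :=
  rfl

lemma diagCompression_vecMulVec_star (X : Matrix m n R) (u w : m → R) :
    diagCompression X (vecMulVec u (star w)) = (Xᴴ *ᵥ u) * star (Xᴴ *ᵥ w) := by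
  ext l
  rw [diagCompression_apply, mul_vecMulVec, vecMulVec_mul, star_mulVec,
    conjTranspose_conjTranspose]
  simp [vecMulVec_apply]

variable [Fintype n]

lemma trace_mul_diagonal_mul_conjTranspose_mul [DecidableEq n] (X : Matrix m n R)
    (c : n → R) (K : Matrix m m R) :
    trace (X * diagonal c * Xᴴ * K) = c ⬝ᵥ diagCompression X K := by
  calc trace (X * diagonal c * Xᴴ * K) = trace (X * (diagonal c * Xᴴ * K)) := by
        simp only [Matrix.mul_assoc]
    _ = trace (diagonal c * (Xᴴ * K * X)) := by
        rw [trace_mul_comm]; simp only [Matrix.mul_assoc]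
    _ = c ⬝ᵥ diagCompression X K := by
        simp [trace, diagonal_mul, dotProduct, diagCompression_apply]

lemma star_mulVec_dotProduct_mulVec_of_mul_conjTranspose [DecidableEq m] {X : Matrix m n R}
    {β : R} (hX : X * Xᴴ = β • 1) (u w : m → R) :
    star (Xᴴ *ᵥ w) ⬝ᵥ Xᴴ *ᵥ u = β * (star w ⬝ᵥ u) := by
  rw [star_mulVec, conjTranspose_conjTranspose, ← dotProduct_mulVec, mulVec_mulVec, hX,
    smul_mulVec, one_mulVec, dotProduct_smul, smul_eq_mul]

end DiagCompression

structure IsETFWith {m n : Type*} [Fintype m] [Fintype n] [DecidableEq m] (X : Matrix m n ℂ)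
    (α β : ℝ) : Prop where
  gram_diag : ∀ j, (Xᴴ * X) j j = 1
  norm_gram : ∀ j k, j ≠ k → ‖(Xᴴ * X) j k‖ = α
  mul_conjTranspose : X * Xᴴ = (β : ℂ) • 1

namespace IsETFWith

variable {m n : Type*} [Fintype m] [Fintype n] [DecidableEq m] {X : Matrix m n ℂ} {α β : ℝ}

lemma mul_card (hX : IsETFWith X α β) : β * Fintype.card m = Fintype.card n := by
  have hC : (β : ℂ) * Fintype.card m = Fintype.card n :=
    calc (β : ℂ) * Fintype.card m = trace (X * Xᴴ) := by
          rw [hX.mul_conjTranspose, trace_smul, trace_one, smul_eq_mul]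
      _ = trace (Xᴴ * X) := trace_mul_comm _ _
      _ = Fintype.card n := by simp [trace, hX.gram_diag]
  exact_mod_cast hC

section

variable [DecidableEq n]

lemma gram_mul_gram_swap (hX : IsETFWith X α β) (j k : n) :
    (Xᴴ * X) j k * (Xᴴ * X) k j = if j = k then 1 else (α ^ 2 : ℂ) := by
  have hswap : (Xᴴ * X) k j = star ((Xᴴ * X) j k) := by
    rw [← conjTranspose_apply, conjTranspose_mul, conjTranspose_conjTranspose]
  split_ifs with hjk
  · subst hjk; rw [hX.gram_diag, one_mul]
  · rw [hswap, Complex.star_def, Complex.mul_conj', hX.norm_gram j k hjk]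

lemma diagCompression_diagonal (hX : IsETFWith X α β) (c : n → ℂ) (l : n) :
    diagCompression X (X * diagonal c * Xᴴ) l = (1 - α ^ 2) * c l + α ^ 2 * ∑ k, c k := by
  rw [diagCompression_apply, show Xᴴ * (X * diagonal c * Xᴴ) * X =
    Xᴴ * X * diagonal c * (Xᴴ * X) by simp only [Matrix.mul_assoc], diag_apply, mul_apply]
  simp only [mul_diagonal, mul_right_comm _ (c _), hX.gram_mul_gram_swap, sum_ite_mul_eq]

lemma mulVec_col_mul_star_dotProduct (hX : IsETFWith X α β) (j : n) {z : n → ℂ}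
    (hz : z j = 0) :
    (Xᴴ *ᵥ Xᵀ j * star z) ⬝ᵥ (z * star (Xᴴ *ᵥ Xᵀ j)) = α ^ 2 * (star z ⬝ᵥ z) := by
  have hcol : ∀ l,
      star ((Xᴴ *ᵥ Xᵀ j) l) * (Xᴴ *ᵥ Xᵀ j) l = if j = l then 1 else (α ^ 2 : ℂ) := by
    intro l
    have hg : (Xᴴ *ᵥ Xᵀ j) l = (Xᴴ * X) l j := by simp [mulVec, mul_apply, dotProduct]
    rw [hg, ← conjTranspose_apply, conjTranspose_mul, conjTranspose_conjTranspose,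
      hX.gram_mul_gram_swap]
  calc (Xᴴ *ᵥ Xᵀ j * star z) ⬝ᵥ (z * star (Xᴴ *ᵥ Xᵀ j))
      = ∑ l, (if j = l then 1 else (α ^ 2 : ℂ)) * (star (z l) * z l) := by
        simp only [dotProduct, Pi.mul_apply, Pi.star_apply, ← hcol]
        exact Finset.sum_congr rfl fun l _ => by ring
    _ = α ^ 2 * (star z ⬝ᵥ z) := by
        rw [sum_ite_mul_eq, hz, star_zero, zero_mul, mul_zero, zero_add]
        rfl

variable [Nonempty n]

lemma one_add_card_sub_one_mul_sq (hX : IsETFWith X α β) :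
    1 + (Fintype.card n - 1) * α ^ 2 = β := by
  obtain ⟨j⟩ := ‹Nonempty n›
  have h := hX.diagCompression_diagonal (fun _ => 1) j
  rw [diagonal_one, Matrix.mul_one, hX.mul_conjTranspose, map_smul, Pi.smul_apply,
    diagCompression_apply, Matrix.mul_one, diag_apply, hX.gram_diag, smul_eq_mul, mul_one] at h
  simp only [mul_one, Finset.sum_const, Finset.card_univ, nsmul_eq_mul] at h
  have hC : ((1 + (Fintype.card n - 1) * α ^ 2 : ℝ) : ℂ) = β := by
    push_cast; linear_combination -h
  exact_mod_cast hC

-- `βI - α²J` inverts the Gram matrix `(1 - α²)I + α²J` of the projections up to `(1 - α²)β`.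
lemma diagCompression_diagonal_correction (hX : IsETFWith X α β) (r : n → ℂ) :
    diagCompression X (X * diagonal (fun l => β * r l - α ^ 2 * ∑ k, r k) * Xᴴ) =
      ((1 - α ^ 2) * β : ℂ) • r := by
  ext l
  have hrow : (1 + (Fintype.card n - 1) * α ^ 2 : ℂ) = β := by
    exact_mod_cast hX.one_add_card_sub_one_mul_sq
  simp only [hX.diagCompression_diagonal, Finset.sum_sub_distrib, ← Finset.mul_sum,
    Finset.sum_const, Finset.card_univ, nsmul_eq_mul, Pi.smul_apply, smul_eq_mul]
  linear_combination (-α ^ 2 * ∑ k, r k : ℂ) * hrow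

lemma diagCompression_surjective (hX : IsETFWith X α β) (hα : α ^ 2 ≠ 1) (hβ : β ≠ 0) :
    Function.Surjective (diagCompression X) := by
  have hscale : ((1 - α ^ 2) * β : ℂ) ≠ 0 := by
    refine mul_ne_zero (sub_ne_zero.mpr ?_) (by exact_mod_cast hβ)
    exact_mod_cast hα.symm
  intro r
  refine ⟨((1 - α ^ 2) * β : ℂ)⁻¹ •
    (X * diagonal (fun l => β * r l - α ^ 2 * ∑ k, r k) * Xᴴ), ?_⟩
  rw [map_smul, hX.diagCompression_diagonal_correction, smul_smul, inv_mul_cancel₀ hscale,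
    one_smul]

lemma finrank_ker_diagCompression_add_card (hX : IsETFWith X α β) (hα : α ^ 2 ≠ 1)
    (hβ : β ≠ 0) :
    Module.finrank ℂ (LinearMap.ker (diagCompression X)) + Fintype.card n =
      Fintype.card m ^ 2 := by
  have h := (diagCompression X).finrank_range_add_finrank_ker
  rw [LinearMap.range_eq_top.mpr (hX.diagCompression_surjective hα hβ), finrank_top,
    Module.finrank_fintype_fun_eq_card, Module.finrank_matrix, Module.finrank_self] at h
  lia

lemma trace_mul_eq_of_forall_mem_ker (hX : IsETFWith X α β) (K₁ K₂ : Matrix m m ℂ)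
    (hK₂ : ∀ A ∈ LinearMap.ker (diagCompression X), trace (A * K₂) = 0) :
    (1 - α ^ 2) * β * trace (K₁ * K₂) =
      β * (diagCompression X K₁ ⬝ᵥ diagCompression X K₂) -
        α ^ 2 * (∑ l, diagCompression X K₁ l) * ∑ l, diagCompression X K₂ l := by
  set r := diagCompression X K₁
  set c : n → ℂ := fun l => β * r l - α ^ 2 * ∑ k, r k
  have hker : ((1 - α ^ 2) * β : ℂ) • K₁ - X * diagonal c * Xᴴ ∈
      LinearMap.ker (diagCompression X) := by
    rw [LinearMap.mem_ker, map_sub, map_smul, hX.diagCompression_diagonal_correction, sub_self]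
  have h := hK₂ _ hker
  rw [Matrix.sub_mul, trace_sub, Matrix.smul_mul, trace_smul, smul_eq_mul,
    trace_mul_diagonal_mul_conjTranspose_mul, sub_eq_zero] at h
  rw [h]
  simp only [c, dotProduct, sub_mul, Finset.sum_sub_distrib, mul_assoc, ← Finset.mul_sum]

open scoped ComplexOrder in
lemma one_sub_sq_eq_sq_mul (hX : IsETFWith X α β) (hβ : β ≠ 0) (j : n) {v : m → ℂ}
    (hv : v ≠ 0) (hvj : star (Xᵀ j) ⬝ᵥ v = 0)
    (hvker : ∀ A ∈ LinearMap.ker (diagCompression X), star (Xᵀ j) ⬝ᵥ A *ᵥ v = 0) :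
    1 - α ^ 2 = α ^ 2 * β := by
  have key := hX.trace_mul_eq_of_forall_mem_ker (vecMulVec (Xᵀ j) (star v))
    (vecMulVec v (star (Xᵀ j))) fun A hA => by rw [trace_mul_vecMulVec]; exact hvker A hA
  have hxx : star (Xᵀ j) ⬝ᵥ Xᵀ j = 1 := by
    simpa [mul_apply, dotProduct] using hX.gram_diag j
  have hzj : (Xᴴ *ᵥ v) j = 0 := by simpa [mulVec, dotProduct] using hvj
  have hsum : ∑ l, (Xᴴ *ᵥ Xᵀ j * star (Xᴴ *ᵥ v)) l = 0 := by
    calc ∑ l, (Xᴴ *ᵥ Xᵀ j * star (Xᴴ *ᵥ v)) l = star (Xᴴ *ᵥ v) ⬝ᵥ Xᴴ *ᵥ Xᵀ j := by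
          simp [dotProduct, mul_comm]
      _ = 0 := by
        rw [star_mulVec_dotProduct_mulVec_of_mul_conjTranspose hX.mul_conjTranspose,
          star_dotProduct, hvj, star_zero, mul_zero]
  rw [diagCompression_vecMulVec_star, diagCompression_vecMulVec_star, vecMulVec_mul_vecMulVec,
    trace_vecMulVec, dotProduct_smul, smul_eq_mul, dotProduct_comm (Xᵀ j), hxx, hsum,
    hX.mulVec_col_mul_star_dotProduct j hzj,
    star_mulVec_dotProduct_mulVec_of_mul_conjTranspose hX.mul_conjTranspose] at key
  have hβv : (β : ℂ) * (star v ⬝ᵥ v) ≠ 0 :=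
    mul_ne_zero (by exact_mod_cast hβ) (dotProduct_star_self_eq_zero.not.mpr hv)
  have hC : ((1 - α ^ 2 : ℝ) : ℂ) = (α ^ 2 * β : ℝ) := by
    push_cast
    refine mul_right_cancel₀ hβv ?_
    linear_combination key
  exact_mod_cast hC

lemma sq_ne_one (hX : IsETFWith X α β) (hm : 1 < Fintype.card m) : α ^ 2 ≠ 1 := by
  intro hα
  have hrow := hX.one_add_card_sub_one_mul_sq
  rw [hα] at hrow
  have hβ : β ≠ 0 := by rintro rfl; norm_num at hrow
  have : (Fintype.card m : ℝ) = 1 := by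
    refine mul_left_cancel₀ hβ ?_
    linear_combination hX.mul_card + hrow
  norm_cast at this
  omega

lemma exists_ne_zero_orthogonal_ker (hX : IsETFWith X α β) (hα : α ^ 2 ≠ 1) (hβ : β ≠ 0)
    (hn : Fintype.card m ^ 2 - Fintype.card m + 1 < Fintype.card n) (x : m → ℂ) :
    ∃ v ≠ 0, x ⬝ᵥ v = 0 ∧ ∀ A ∈ LinearMap.ker (diagCompression X), x ⬝ᵥ A *ᵥ v = 0 := by
  -- Adjoining `1` to the kernel also makes `v` orthogonal to `x`.
  have hW : Module.finrank ℂ ↥(LinearMap.ker (diagCompression X) ⊔ ℂ ∙ (1 : Matrix m m ℂ)) <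
      Fintype.card m := by
    have hsup := Submodule.finrank_add_le_finrank_add_finrank
      (LinearMap.ker (diagCompression X)) (ℂ ∙ (1 : Matrix m m ℂ))
    have hspan : Module.finrank ℂ ↥(ℂ ∙ (1 : Matrix m m ℂ)) ≤ 1 :=
      (finrank_span_le_card ({1} : Set (Matrix m m ℂ))).trans (by simp)
    have hker := hX.finrank_ker_diagCompression_add_card hα hβ
    have hsq : Fintype.card m ≤ Fintype.card m ^ 2 := Nat.le_self_pow two_ne_zero _
    omega
  obtain ⟨v, hv, hvW⟩ := exists_ne_zero_forall_dotProduct_mulVec_eq_zero _ x hW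
  refine ⟨v, hv, ?_, fun A hA => hvW A (Submodule.mem_sup_left hA)⟩
  simpa using hvW 1 (Submodule.mem_sup_right (Submodule.mem_span_singleton_self 1))

end

theorem card_eq_sq [DecidableEq n] (hX : IsETFWith X α β) (hm : 1 < Fintype.card m)
    (hn : Fintype.card m ^ 2 - Fintype.card m + 1 < Fintype.card n) :
    Fintype.card n = Fintype.card m ^ 2 := by
  obtain ⟨j⟩ : Nonempty n := Fintype.card_pos_iff.mp (by omega)
  have : Nonempty n := ⟨j⟩
  have hN : (Fintype.card n : ℝ) ≠ 0 := by positivity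
  have hβd := hX.mul_card
  have hβ : β ≠ 0 := left_ne_zero_of_mul (hβd ▸ hN)
  have hα := hX.sq_ne_one hm
  obtain ⟨v, hv, hvj, hvker⟩ := hX.exists_ne_zero_orthogonal_ker hα hβ hn (star (Xᵀ j))
  have hαβ := hX.one_sub_sq_eq_sq_mul hβ j hv hvj hvker
  have hβsq : β ^ 2 = Fintype.card n := by
    linear_combination (-(β + 1)) * hX.one_add_card_sub_one_mul_sq - (Fintype.card n - 1) * hαβ
  have hC : (Fintype.card n : ℝ) = Fintype.card m ^ 2 := by
    refine mul_left_cancel₀ hN ?_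
    linear_combination (-(Fintype.card n + β * Fintype.card m)) * hβd +
      Fintype.card m ^ 2 * hβsq
  exact_mod_cast hC

end IsETFWith

/-- There does not exist a complex `d × n` equiangular tight frame with
`d² − d + 1 < n < d²`. -/
theorem singer_zauner_gap :
    ¬ ∃ (d n : ℕ) (X : Matrix (Fin d) (Fin n) ℂ),
      IsETF X ∧ d ^ 2 - d + 1 < n ∧ n < d ^ 2 := by
  rintro ⟨d, n, X, ⟨α, β, -, -, hdiag, hnorm, hframe⟩, hlow, hupp⟩
  have hd : 1 < d := by
    by_contra! hd
    interval_cases d <;> omega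
  have := IsETFWith.card_eq_sq ⟨hdiag, hnorm, hframe⟩ (by simpa using hd) (by simpa using hlow)
  simp only [Fintype.card_fin] at this
  omega
end

section
/- There does not exist a complex 3×8 equiangular tight frame. -/
open Matrix

/-!
Let `P j` be the projection onto the `j`-th column of a `d × n` ETF and `A j = P j - 1/d`.
Equiangularity gives `tr (A j * A k) = (1 - α²) δⱼₖ + α² - 1/d` and tightness gives
`∑ j, A j = 0`, so `M ↦ ∑ j, tr (M * A j) • A j` is `1 - α²` times the trace-form projection onto
the span of the `A j`. By the Welch bound equality, the complementary projection `Ψ` inside the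
traceless matrices has trace `d² - n`, and `∑ p q, E q p * Ψ (E p q)` (with `E p q = single p q 1`)
is `((d² - n) / d) • 1`. For `n = d² - 1`, `Ψ` therefore has rank one,
`Ψ M = tr (M * v) • v / tr (v * v)`, and the same sum equals `v * v / tr (v * v)`. So `v` is
traceless with `v * v` a nonzero scalar: its eigenvalues are `±s` in equal numbers, and `d` is
even.
-/

section TraceForm

variable {K : Type*} [Field K] {m : Type*} [Fintype m] [DecidableEq m]

def traceRankOne (B C : Matrix m m K) : Module.End K (Matrix m m K) :=
  ((traceLinearMap m K K).comp (LinearMap.mulRight K B)).smulRight C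

@[simp]
lemma traceRankOne_apply (B C M : Matrix m m K) : traceRankOne B C M = (M * B).trace • C :=
  rfl

lemma trace_traceRankOne (B C : Matrix m m K) :
    LinearMap.trace K _ (traceRankOne B C) = (C * B).trace :=
  LinearMap.trace_smulRight _ _

/-- Through `End (Matrix m m K) ≃ Matrix m m K ⊗ Matrix m m K`, `B ⊗ C ↦ traceRankOne B C`,
this is multiplication of the two tensor factors. -/
def contractMul : Module.End K (Matrix m m K) →ₗ[K] Matrix m m K where
  toFun L := ∑ p, ∑ q, single q p 1 * L (single p q 1)
  map_add' L L' := by simp only [LinearMap.add_apply, mul_add, Finset.sum_add_distrib]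
  map_smul' c L := by
    simp only [LinearMap.smul_apply, mul_smul_comm, Finset.smul_sum, RingHom.id_apply]

lemma contractMul_apply (L : Module.End K (Matrix m m K)) :
    contractMul L = ∑ p, ∑ q, single q p 1 * L (single p q 1) :=
  rfl

lemma contractMul_traceRankOne (B C : Matrix m m K) :
    contractMul (traceRankOne B C) = B * C := by
  conv_rhs => rw [matrix_eq_sum_single B, Finset.sum_comm]
  simp only [contractMul_apply, traceRankOne_apply, trace_single_mul, Finset.sum_mul,
    mul_smul_comm]
  simp only [← smul_mul_assoc, smul_single, smul_eq_mul, mul_one, one_mul]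

lemma contractMul_id :
    contractMul (LinearMap.id : Module.End K (Matrix m m K)) = (Fintype.card m : K) • 1 := by
  simp only [contractMul_apply, LinearMap.id_apply, single_mul_single_same, mul_one,
    Finset.sum_const, Finset.card_univ, sum_single_one, Nat.cast_smul_eq_nsmul]

lemma exists_eq_smul_traceRankOne [CharZero K] {Ψ : Module.End K (Matrix m m K)}
    (hΨ : IsIdempotentElem Ψ) (htr : LinearMap.trace K _ Ψ = 1)
    (hsymm : ∀ M N, (Ψ M * N).trace = (M * Ψ N).trace) :
    ∃ v : Matrix m m K, (v * v).trace ≠ 0 ∧ Ψ = ((v * v).trace)⁻¹ • traceRankOne v v := by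
  have hrank : Module.finrank K (LinearMap.range Ψ) = 1 := by
    exact_mod_cast ((LinearMap.isProj_range_iff_isIdempotentElem Ψ).mpr hΨ).trace.symm.trans htr
  obtain ⟨⟨v, hv_mem⟩, hv0, hspan⟩ := finrank_eq_one_iff'.mp hrank
  have hv0 : v ≠ 0 := fun h => hv0 (Subtype.ext h)
  have hΨv : Ψ v = v := by
    obtain ⟨w, rfl⟩ := hv_mem
    exact congr($hΨ w)
  have hcoef (M : Matrix m m K) : ∃ c : K, Ψ M = c • v := by
    obtain ⟨c, hc⟩ := hspan ⟨Ψ M, LinearMap.mem_range_self Ψ M⟩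
    exact ⟨c, congr(Subtype.val $hc).symm⟩
  have htrace (M : Matrix m m K) : (Ψ M * v).trace = (M * v).trace := by rw [hsymm, hΨv]
  have hvv : (v * v).trace ≠ 0 := by
    intro h
    refine hv0 (ext_iff_trace_mul_left.mpr fun M => ?_)
    obtain ⟨c, hc⟩ := hcoef M
    rw [← htrace, hc, smul_mul_assoc, trace_smul, h, smul_zero, mul_zero, trace_zero]
  refine ⟨v, hvv, LinearMap.ext fun M => ?_⟩
  obtain ⟨c, hc⟩ := hcoef M
  have hc_trace := htrace M
  rw [hc, smul_mul_assoc, trace_smul, smul_eq_mul] at hc_trace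
  rw [hc, LinearMap.smul_apply, traceRankOne_apply, smul_smul, ← hc_trace, mul_comm,
    mul_inv_cancel_right₀ hvv]

lemma Matrix.even_card_of_mul_self_eq_smul_one [IsAlgClosed K] [CharZero K]
    {N : Matrix m m K} {c : K} (hc : c ≠ 0) (htr : N.trace = 0) (hN : N * N = c • 1) :
    Even (Fintype.card m) := by
  obtain ⟨s, rfl⟩ := IsAlgClosed.exists_eq_mul_self c
  have hs : s ≠ 0 := by rintro rfl; simp at hc
  set E : Matrix m m K := (2 : K)⁻¹ • (1 + s⁻¹ • N)
  have hE : IsIdempotentElem (toLin' E) := by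
    have hEE : E * E = E := by
      simp only [E, smul_mul_smul_comm, add_mul, mul_add, mul_one, one_mul, hN]
      rw [smul_smul, show s⁻¹ * s⁻¹ * (s * s) = 1 by field_simp, one_smul]
      module
    rw [IsIdempotentElem, Module.End.mul_eq_comp, ← toLin'_mul, hEE]
  have htrE : (Fintype.card m : K) = 2 * Module.finrank K (LinearMap.range (toLin' E)) := by
    rw [← ((LinearMap.isProj_range_iff_isIdempotentElem _).mpr hE).trace, trace_toLin'_eq]
    simp [E, trace_add, htr]
  exact ⟨_, by exact_mod_cast htrE.trans (two_mul _)⟩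

lemma even_card_of_isIdempotentElem_of_trace_eq_one [IsAlgClosed K] [CharZero K]
    {Ψ : Module.End K (Matrix m m K)} (hΨ : IsIdempotentElem Ψ)
    (htr : LinearMap.trace K _ Ψ = 1) (hsymm : ∀ M N, (Ψ M * N).trace = (M * Ψ N).trace)
    (htraceless : ∀ M, (Ψ M).trace = 0) {c : K} (hc : c ≠ 0)
    (hcontract : contractMul Ψ = c • 1) :
    Even (Fintype.card m) := by
  obtain ⟨v, hvv, rfl⟩ := exists_eq_smul_traceRankOne hΨ htr hsymm
  have hv : v * v = ((v * v).trace * c) • 1 := by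
    rw [map_smul, contractMul_traceRankOne] at hcontract
    rw [mul_smul, ← hcontract, smul_smul, mul_inv_cancel₀ hvv, one_smul]
  have htrv : v.trace = 0 := by
    simpa [smul_smul, inv_mul_cancel₀ hvv] using htraceless v
  exact even_card_of_mul_self_eq_smul_one (mul_ne_zero hvv hc) htrv hv

end TraceForm

section Frame

variable {d n : ℕ} {X : Matrix (Fin d) (Fin n) ℂ}

lemma gram_mul_gram_swap (j k : Fin n) :
    (Xᴴ * X) j k * (Xᴴ * X) k j = (‖(Xᴴ * X) j k‖ ^ 2 : ℝ) := by
  have hswap : (Xᴴ * X) k j = star ((Xᴴ * X) j k) := by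
    rw [← conjTranspose_apply, conjTranspose_mul, conjTranspose_conjTranspose]
  rw [hswap, Complex.star_def, Complex.mul_conj, Complex.normSq_eq_norm_sq]

lemma frame_bound_mul_card_eq {β : ℂ} (hdiag : ∀ j, (Xᴴ * X) j j = 1)
    (htight : X * Xᴴ = β • 1) : β * d = n := by
  have h := trace_mul_comm X Xᴴ
  rw [htight, trace_smul, trace_one, Fintype.card_fin, smul_eq_mul] at h
  simpa [trace, hdiag] using h

lemma frame_bound_eq_one_add_mul {β a : ℂ} (hn : 0 < n) (hdiag : ∀ j, (Xᴴ * X) j j = 1)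
    (hoff : ∀ j k, j ≠ k → (Xᴴ * X) j k * (Xᴴ * X) k j = a) (htight : X * Xᴴ = β • 1) :
    β = 1 + (n - 1) * a := by
  set j : Fin n := ⟨0, hn⟩
  have hsq : (Xᴴ * X) * (Xᴴ * X) = β • (Xᴴ * X) := by
    rw [Matrix.mul_assoc, ← Matrix.mul_assoc X, htight, Matrix.smul_mul, Matrix.one_mul,
      Matrix.mul_smul]
  have hterm (k : Fin n) : (Xᴴ * X) j k * (Xᴴ * X) k j = a + if j = k then 1 - a else 0 := by
    split_ifs with hjk
    · rw [← hjk, hdiag, mul_one]; ring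
    · rw [hoff j k hjk, add_zero]
  have h := congr_fun₂ hsq j j
  rw [mul_apply, Matrix.smul_apply, hdiag, smul_eq_mul, mul_one] at h
  simp only [hterm, Finset.sum_add_distrib, Finset.sum_ite_eq, Finset.mem_univ, if_true,
    Finset.sum_const, Finset.card_univ, Fintype.card_fin, nsmul_eq_mul] at h
  rw [← h]
  ring

lemma welch_bound_eq {a : ℂ} (hd : (d : ℂ) ≠ 0) (hn : 0 < n) (hdiag : ∀ j, (Xᴴ * X) j j = 1)
    (hoff : ∀ j k, j ≠ k → (Xᴴ * X) j k * (Xᴴ * X) k j = a) (hX : X * Xᴴ = ((n : ℂ) / d) • 1) :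
    (1 - a) * (n - 1) = n * (1 - (d : ℂ)⁻¹) := by
  have h := frame_bound_eq_one_add_mul hn hdiag hoff hX
  field_simp at h ⊢
  linear_combination h

variable (X)

noncomputable def colProj (j : Fin n) : Matrix (Fin d) (Fin d) ℂ :=
  vecMulVec (Xᵀ j) (star (Xᵀ j))

noncomputable def tracelessColProj (j : Fin n) : Matrix (Fin d) (Fin d) ℂ :=
  colProj X j - (d : ℂ)⁻¹ • 1

noncomputable def frameOp : Module.End ℂ (Matrix (Fin d) (Fin d) ℂ) :=
  ∑ j, traceRankOne (tracelessColProj X j) (tracelessColProj X j)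

/-- For an ETF with `(Xᴴ * X) j k * (Xᴴ * X) k j = a` off the diagonal, `frameOp X` is `1 - a`
times the trace-form projection onto the span of the `tracelessColProj X j`, so this is the
projection onto the traceless matrices orthogonal to all of them. -/
noncomputable def complementProj (a : ℂ) : Module.End ℂ (Matrix (Fin d) (Fin d) ℂ) :=
  LinearMap.id - (d : ℂ)⁻¹ • traceRankOne 1 1 - (1 - a)⁻¹ • frameOp X

lemma gram_apply (j k : Fin n) : (Xᴴ * X) j k = star (Xᵀ j) ⬝ᵥ Xᵀ k := by
  simp [mul_apply, dotProduct]

lemma sum_colProj : ∑ j, colProj X j = X * Xᴴ := by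
  ext p q
  simp [colProj, mul_apply, Matrix.sum_apply, vecMulVec_apply]

lemma colProj_mul_colProj (j k : Fin n) :
    colProj X j * colProj X k = (Xᴴ * X) j k • vecMulVec (Xᵀ j) (star (Xᵀ k)) := by
  rw [colProj, colProj, vecMulVec_mul_vecMulVec, gram_apply, vecMulVec_smul]

lemma trace_colProj (j : Fin n) : (colProj X j).trace = (Xᴴ * X) j j := by
  rw [colProj, trace_vecMulVec, gram_apply, dotProduct_comm]

lemma trace_colProj_mul_colProj (j k : Fin n) :
    (colProj X j * colProj X k).trace = (Xᴴ * X) j k * (Xᴴ * X) k j := by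
  rw [colProj_mul_colProj, trace_smul, trace_vecMulVec, dotProduct_comm, ← gram_apply,
    smul_eq_mul]

lemma frameOp_apply (M : Matrix (Fin d) (Fin d) ℂ) :
    frameOp X M = ∑ j, (M * tracelessColProj X j).trace • tracelessColProj X j := by
  simp [frameOp]

lemma trace_frameOp_apply_mul (M N : Matrix (Fin d) (Fin d) ℂ) :
    (frameOp X M * N).trace = (M * frameOp X N).trace := by
  simp only [frameOp_apply, Finset.sum_mul, Finset.mul_sum, smul_mul_assoc, mul_smul_comm,
    trace_sum, trace_smul, smul_eq_mul, trace_mul_comm _ N]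
  exact Finset.sum_congr rfl fun j _ => mul_comm _ _

lemma complementProj_apply (a : ℂ) (M : Matrix (Fin d) (Fin d) ℂ) :
    complementProj X a M = M - ((d : ℂ)⁻¹ * M.trace) • 1 - (1 - a)⁻¹ • frameOp X M := by
  simp [complementProj, smul_smul]

lemma trace_complementProj_apply_mul (a : ℂ) (M N : Matrix (Fin d) (Fin d) ℂ) :
    (complementProj X a M * N).trace = (M * complementProj X a N).trace := by
  simp only [complementProj_apply, sub_mul, mul_sub, smul_mul_assoc, mul_smul_comm, one_mul,
    mul_one, trace_sub, trace_smul, smul_eq_mul, trace_frameOp_apply_mul, trace_mul_comm M N]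
  ring

variable {X}

lemma trace_tracelessColProj (hd : (d : ℂ) ≠ 0) {j : Fin n} (hj : (Xᴴ * X) j j = 1) :
    (tracelessColProj X j).trace = 0 := by
  rw [tracelessColProj, trace_sub, trace_smul, trace_colProj, hj, trace_one, Fintype.card_fin,
    smul_eq_mul, inv_mul_cancel₀ hd, sub_self]

lemma sum_tracelessColProj (hX : X * Xᴴ = ((n : ℂ) / d) • 1) :
    ∑ j, tracelessColProj X j = 0 := by
  simp only [tracelessColProj]
  rw [Finset.sum_sub_distrib, sum_colProj, hX, Finset.sum_const, Finset.card_univ,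
    Fintype.card_fin, ← Nat.cast_smul_eq_nsmul ℂ, smul_smul, div_eq_mul_inv, sub_self]

lemma trace_tracelessColProj_mul (hd : (d : ℂ) ≠ 0) (hdiag : ∀ j, (Xᴴ * X) j j = 1)
    (j k : Fin n) :
    (tracelessColProj X j * tracelessColProj X k).trace =
      (Xᴴ * X) j k * (Xᴴ * X) k j - (d : ℂ)⁻¹ := by
  simp only [tracelessColProj, sub_mul, mul_sub, smul_mul_assoc, mul_smul_comm, one_mul, mul_one,
    trace_sub, trace_smul, trace_colProj_mul_colProj, trace_colProj, hdiag, trace_one,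
    Fintype.card_fin, smul_eq_mul]
  field_simp
  ring

lemma tracelessColProj_mul_self {j : Fin n} (hj : (Xᴴ * X) j j = 1) :
    tracelessColProj X j * tracelessColProj X j =
      (1 - 2 * (d : ℂ)⁻¹) • colProj X j + ((d : ℂ)⁻¹ ^ 2) • 1 := by
  have hP : colProj X j * colProj X j = colProj X j := by
    rw [colProj_mul_colProj, hj, one_smul, colProj]
  simp only [tracelessColProj, sub_mul, mul_sub, smul_mul_assoc, mul_smul_comm, one_mul, mul_one,
    hP]
  module

lemma sum_tracelessColProj_mul_self (hdiag : ∀ j, (Xᴴ * X) j j = 1)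
    (hX : X * Xᴴ = ((n : ℂ) / d) • 1) :
    ∑ j, tracelessColProj X j * tracelessColProj X j =
      ((n : ℂ) * (1 - (d : ℂ)⁻¹) / d) • 1 := by
  simp only [tracelessColProj_mul_self (hdiag _), Finset.sum_add_distrib, ← Finset.smul_sum,
    sum_colProj, hX, Finset.sum_const, Finset.card_univ, Fintype.card_fin,
    ← Nat.cast_smul_eq_nsmul ℂ, smul_smul, ← add_smul]
  congr 1
  ring

lemma frameOp_apply_tracelessColProj {a : ℂ} (hd : (d : ℂ) ≠ 0)
    (hdiag : ∀ j, (Xᴴ * X) j j = 1) (hoff : ∀ j k, j ≠ k → (Xᴴ * X) j k * (Xᴴ * X) k j = a)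
    (hX : X * Xᴴ = ((n : ℂ) / d) • 1) (k : Fin n) :
    frameOp X (tracelessColProj X k) = (1 - a) • tracelessColProj X k := by
  have hcoef (j : Fin n) : (tracelessColProj X k * tracelessColProj X j).trace =
      (a - (d : ℂ)⁻¹) + if k = j then 1 - a else 0 := by
    rw [trace_tracelessColProj_mul hd hdiag]
    split_ifs with hkj
    · rw [hkj, hdiag, mul_one]; ring
    · rw [hoff k j hkj]; ring
  simp only [frameOp_apply, hcoef, add_smul, Finset.sum_add_distrib, ← Finset.smul_sum,
    sum_tracelessColProj hX, smul_zero, zero_add, ite_smul, zero_smul, Finset.sum_ite_eq,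
    Finset.mem_univ, if_true]

lemma frameOp_apply_one (hd : (d : ℂ) ≠ 0) (hdiag : ∀ j, (Xᴴ * X) j j = 1) :
    frameOp X 1 = 0 := by
  simp [frameOp_apply, trace_tracelessColProj hd (hdiag _)]

lemma trace_frameOp_apply (hd : (d : ℂ) ≠ 0) (hdiag : ∀ j, (Xᴴ * X) j j = 1)
    (M : Matrix (Fin d) (Fin d) ℂ) : (frameOp X M).trace = 0 := by
  simp [frameOp_apply, trace_sum, trace_tracelessColProj hd (hdiag _)]

lemma frameOp_frameOp {a : ℂ} (hd : (d : ℂ) ≠ 0) (hdiag : ∀ j, (Xᴴ * X) j j = 1)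
    (hoff : ∀ j k, j ≠ k → (Xᴴ * X) j k * (Xᴴ * X) k j = a) (hX : X * Xᴴ = ((n : ℂ) / d) • 1)
    (M : Matrix (Fin d) (Fin d) ℂ) : frameOp X (frameOp X M) = (1 - a) • frameOp X M := by
  simp only [frameOp_apply X M, map_sum, map_smul, frameOp_apply_tracelessColProj hd hdiag hoff hX,
    Finset.smul_sum, smul_comm (1 - a)]

lemma frameOp_complementProj_apply {a : ℂ} (ha : 1 - a ≠ 0) (hd : (d : ℂ) ≠ 0)
    (hdiag : ∀ j, (Xᴴ * X) j j = 1) (hoff : ∀ j k, j ≠ k → (Xᴴ * X) j k * (Xᴴ * X) k j = a)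
    (hX : X * Xᴴ = ((n : ℂ) / d) • 1) (M : Matrix (Fin d) (Fin d) ℂ) :
    frameOp X (complementProj X a M) = 0 := by
  rw [complementProj_apply, map_sub, map_sub, map_smul, map_smul, frameOp_apply_one hd hdiag,
    frameOp_frameOp hd hdiag hoff hX, smul_smul, inv_mul_cancel₀ ha, one_smul, smul_zero,
    sub_zero, sub_self]

lemma trace_complementProj_apply (a : ℂ) (hd : (d : ℂ) ≠ 0) (hdiag : ∀ j, (Xᴴ * X) j j = 1)
    (M : Matrix (Fin d) (Fin d) ℂ) : (complementProj X a M).trace = 0 := by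
  rw [complementProj_apply, trace_sub, trace_sub, trace_smul, trace_smul,
    trace_frameOp_apply hd hdiag, trace_one, Fintype.card_fin, smul_eq_mul, smul_zero]
  field_simp
  ring

lemma isIdempotentElem_complementProj {a : ℂ} (ha : 1 - a ≠ 0) (hd : (d : ℂ) ≠ 0)
    (hdiag : ∀ j, (Xᴴ * X) j j = 1) (hoff : ∀ j k, j ≠ k → (Xᴴ * X) j k * (Xᴴ * X) k j = a)
    (hX : X * Xᴴ = ((n : ℂ) / d) • 1) : IsIdempotentElem (complementProj X a) := by
  refine LinearMap.ext fun M => ?_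
  rw [Module.End.mul_apply, complementProj_apply X _ (complementProj X a M),
    trace_complementProj_apply a hd hdiag, frameOp_complementProj_apply ha hd hdiag hoff hX]
  simp

lemma trace_complementProj {a : ℂ} (ha : 1 - a ≠ 0) (hd : (d : ℂ) ≠ 0) (hn : 0 < n)
    (hdiag : ∀ j, (Xᴴ * X) j j = 1) (hoff : ∀ j k, j ≠ k → (Xᴴ * X) j k * (Xᴴ * X) k j = a)
    (hX : X * Xᴴ = ((n : ℂ) / d) • 1) :
    LinearMap.trace ℂ _ (complementProj X a) = (d : ℂ) ^ 2 - n := by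
  have hwelch : (1 - a)⁻¹ * (n * (1 - (d : ℂ)⁻¹)) = n - 1 := by
    rw [inv_mul_eq_iff_eq_mul₀ ha, welch_bound_eq hd hn hdiag hoff hX]
  have htrace : LinearMap.trace ℂ _ (complementProj X a) =
      (d : ℂ) ^ 2 - 1 - (1 - a)⁻¹ * (n * (1 - (d : ℂ)⁻¹)) := by
    simp only [complementProj, frameOp, map_sub, map_smul, map_sum, LinearMap.trace_id,
      trace_traceRankOne, Module.finrank_matrix, trace_tracelessColProj_mul hd hdiag, hdiag]
    simp [smul_eq_mul]
    field_simp
  rw [htrace, hwelch]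
  ring

lemma contractMul_complementProj {a : ℂ} (ha : 1 - a ≠ 0) (hd : (d : ℂ) ≠ 0) (hn : 0 < n)
    (hdiag : ∀ j, (Xᴴ * X) j j = 1) (hoff : ∀ j k, j ≠ k → (Xᴴ * X) j k * (Xᴴ * X) k j = a)
    (hX : X * Xᴴ = ((n : ℂ) / d) • 1) :
    contractMul (complementProj X a) = (((d : ℂ) ^ 2 - n) / d) • 1 := by
  have hwelch : (1 - a)⁻¹ * (n * (1 - (d : ℂ)⁻¹)) = n - 1 := by
    rw [inv_mul_eq_iff_eq_mul₀ ha, welch_bound_eq hd hn hdiag hoff hX]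
  simp only [complementProj, frameOp, map_sub, map_smul, map_sum, contractMul_id,
    contractMul_traceRankOne, sum_tracelessColProj_mul_self hdiag hX, Fintype.card_fin,
    mul_one, smul_smul, ← sub_smul, mul_div_assoc', hwelch]
  congr 1
  field_simp
  ring

end Frame

theorem not_isETF_of_odd {d n : ℕ} (hd : Odd d) (hdn : n + 1 = d ^ 2)
    (X : Matrix (Fin d) (Fin n) ℂ) : ¬ IsETF X := by
  rintro ⟨α, β, -, hβ, hdiag, hoff, htight⟩
  have hd0 : (d : ℂ) ≠ 0 := by exact_mod_cast hd.pos.ne'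
  have hβd := frame_bound_mul_card_eq hdiag htight
  have hn : 0 < n := by
    have hβd' : (n : ℝ) = β * d := by exact_mod_cast hβd.symm
    exact_mod_cast hβd' ▸ mul_pos hβ (Nat.cast_pos.mpr hd.pos)
  have hd1 : 1 < d := by
    by_contra! h
    interval_cases d <;> simp_all
  have hX : X * Xᴴ = ((n : ℂ) / d) • 1 := by
    rw [htight, ← hβd, mul_div_cancel_right₀ _ hd0]
  set a : ℂ := ((α ^ 2 : ℝ) : ℂ)
  have hoff' (j k : Fin n) (hjk : j ≠ k) : (Xᴴ * X) j k * (Xᴴ * X) k j = a := by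
    rw [gram_mul_gram_swap, hoff j k hjk]
  have ha : 1 - a ≠ 0 := by
    refine left_ne_zero_of_mul (b := (n : ℂ) - 1) ?_
    rw [welch_bound_eq hd0 hn hdiag hoff' hX]
    refine mul_ne_zero (by exact_mod_cast hn.ne') ?_
    rw [sub_ne_zero, ne_comm, inv_ne_one]
    exact_mod_cast hd1.ne'
  have hdn' : (d : ℂ) ^ 2 - n = 1 := by
    rw [← Nat.cast_pow, ← hdn]
    push_cast
    ring
  have heven := even_card_of_isIdempotentElem_of_trace_eq_one
    (isIdempotentElem_complementProj ha hd0 hdiag hoff' hX)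
    (by rw [trace_complementProj ha hd0 hn hdiag hoff' hX, hdn'])
    (trace_complementProj_apply_mul X a) (trace_complementProj_apply a hd0 hdiag)
    (one_div_ne_zero hd0) (by rw [contractMul_complementProj ha hd0 hn hdiag hoff' hX, hdn'])
  rw [Fintype.card_fin] at heven
  exact Nat.not_even_iff_odd.mpr hd heven

/-- There does not exist a complex `3 × 8` equiangular tight frame. -/
theorem no_three_by_eight_etf :
    ¬ ∃ X : Matrix (Fin 3) (Fin 8) ℂ, IsETF X :=
  fun ⟨X, hX⟩ => not_isETF_of_odd (by decide) (by norm_num) X hX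
end

section
/- Let X be a complex d×n equiangular tight frame with d ≥ 2 and n > d, and let α = √((n − d)/(d(n − 1))). Then there exists a matrix Y ∈ ℂ^{(d−1)×(n−1)} such that Y is a (d−1)×(n−1) unit norm tight frame, Y𝟙 = 0 (the all-ones vector is in the kernel of Y), and every off-diagonal entry z of Y*Y satisfies |α² + (1 − α²)z| = α. -/
/-!
Comparing the traces of `XXᴴ` and of `(XᴴX)²` shows that the frame bound is `n / d` and that the
common modulus `a` of the off-diagonal Gram entries meets the Welch bound with equality,
`a² = (n - d) / (d (n - 1))`; hence `a = α`. Multiplying the columns of `X` by unimodular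
scalars and `X` on the left by a unitary matrix preserves all of this, and can be used to make
the first column `e₀` and the first row `(1, a, …, a)`. Deleting this row and column leaves a
block `W` whose rows are orthogonal of squared norm `n / d`, orthogonal to `𝟙` (being orthogonal
to the first row), whose columns have squared norm `1 - a²`, and such that the Gram matrix is
`a² + WᴴW` away from the first row and column. So `Y = W / √(1 - a²)` works.
-/
open Matrix

/-- `Y` is a complex `d × n` unit norm tight frame: its columns have unit norm and
`YYᴴ = (n/d) I`. -/
def IsUNTF {d n : ℕ} (Y : Matrix (Fin d) (Fin n) ℂ) : Prop :=
  (∀ j, ∑ i, ‖Y i j‖ ^ 2 = 1) ∧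
    Y * Yᴴ = (((n : ℝ) / d : ℝ) : ℂ) • (1 : Matrix (Fin d) (Fin d) ℂ)

section Unitary

variable {𝕜 m n : Type*} [RCLike 𝕜] [Fintype m] [Fintype n]

lemma diagonal_mem_unitaryGroup [DecidableEq n] {c : n → 𝕜} (hc : ∀ k, ‖c k‖ = 1) :
    diagonal c ∈ unitaryGroup n 𝕜 := by
  rw [mem_unitaryGroup_iff, star_eq_conjTranspose, diagonal_conjTranspose, diagonal_mul_diagonal,
    ← diagonal_one]
  congr 1
  funext k
  simp [RCLike.mul_conj, hc]

lemma exists_mem_unitaryGroup_mulVec_eq_single [DecidableEq m] (i₀ : m) {x : m → 𝕜}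
    (hx : star x ⬝ᵥ x = 1) : ∃ U ∈ unitaryGroup m 𝕜, U *ᵥ x = Pi.single i₀ 1 := by
  have hunit : Orthonormal 𝕜 (({i₀} : Set m).domRestrict fun _ => WithLp.toLp 2 x) := by
    rw [orthonormal_iff_ite]
    rintro ⟨i, rfl⟩ ⟨j, rfl⟩
    rw [if_pos rfl, ← hx, dotProduct_comm]
    exact EuclideanSpace.inner_toLp_toLp x x
  obtain ⟨b, hb⟩ := hunit.exists_orthonormalBasis_extension_of_card_eq (by simp)
  refine ⟨b.toBasis.toMatrix (EuclideanSpace.basisFun m 𝕜),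
    b.toMatrix_orthonormalBasis_mem_unitary _, ?_⟩
  have hx : x = (EuclideanSpace.basisFun m 𝕜).toBasis.repr (b i₀) := by rw [hb i₀ rfl]; rfl
  rw [hx, ← OrthonormalBasis.coe_toBasis, Module.Basis.toMatrix_mulVec_repr, ← b.coe_toBasis,
    Module.Basis.repr_self, Finsupp.single_eq_pi_single]

lemma conjTranspose_mul_self_of_mem_unitaryGroup [DecidableEq m] {U : Matrix m m 𝕜}
    (hU : U ∈ unitaryGroup m 𝕜) (X : Matrix m n 𝕜) (V : Matrix n n 𝕜) :
    (U * X * V)ᴴ * (U * X * V) = Vᴴ * (Xᴴ * X) * V := by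
  rw [mem_unitaryGroup_iff', star_eq_conjTranspose] at hU
  simp only [conjTranspose_mul, Matrix.mul_assoc]
  rw [← Matrix.mul_assoc Uᴴ U, hU, Matrix.one_mul]

lemma mul_conjTranspose_self_of_mem_unitaryGroup [DecidableEq n] (U : Matrix m m 𝕜)
    (X : Matrix m n 𝕜) {V : Matrix n n 𝕜} (hV : V ∈ unitaryGroup n 𝕜) :
    (U * X * V) * (U * X * V)ᴴ = U * (X * Xᴴ) * Uᴴ := by
  rw [mem_unitaryGroup_iff, star_eq_conjTranspose] at hV
  simp only [conjTranspose_mul, Matrix.mul_assoc]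
  rw [← Matrix.mul_assoc V Vᴴ, hV, Matrix.one_mul]

end Unitary

section Gram

variable {m n : Type*} [Fintype m]

lemma conjTranspose_mul_self_apply_self (A : Matrix m n ℂ) (j : n) :
    (Aᴴ * A) j j = ((∑ i, ‖A i j‖ ^ 2 : ℝ) : ℂ) := by
  simp [mul_apply, Complex.conj_mul']

lemma conjTranspose_mul_self_apply_of_col_eq_single [DecidableEq m] {Z : Matrix m n ℂ} {i₀ : m}
    {j₀ : n} (hcol : ∀ i, Z i j₀ = (Pi.single i₀ 1 : m → ℂ) i) (k : n) :
    (Zᴴ * Z) j₀ k = Z i₀ k := by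
  simp [mul_apply, hcol, Pi.single_apply]

lemma trace_mul_self_of_isHermitian {A : Matrix m m ℂ} (hA : A.IsHermitian) :
    trace (A * A) = ((∑ j, ∑ k, ‖A j k‖ ^ 2 : ℝ) : ℂ) := by
  simp only [trace, diag_apply, mul_apply]
  push_cast
  refine Finset.sum_congr rfl fun j _ => Finset.sum_congr rfl fun k _ => ?_
  rw [← hA.apply k j, Complex.star_def, Complex.mul_conj']

variable [Fintype n] {X : Matrix m n ℂ} {a β : ℝ}

lemma sum_norm_sq_gram_row (hdiag : ∀ j, (Xᴴ * X) j j = 1)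
    (hoff : ∀ j k, j ≠ k → ‖(Xᴴ * X) j k‖ = a) (j : n) :
    ∑ k, ‖(Xᴴ * X) j k‖ ^ 2 = 1 + ((Fintype.card n : ℝ) - 1) * a ^ 2 := by
  classical
  rw [← Finset.add_sum_erase _ _ (Finset.mem_univ j), hdiag, norm_one,
    Finset.sum_congr rfl fun k hk => by rw [hoff j k (Finset.ne_of_mem_erase hk).symm],
    Finset.sum_const, Finset.card_erase_of_mem (Finset.mem_univ j), nsmul_eq_mul,
    Finset.card_univ, Nat.cast_pred (Fintype.card_pos_iff.mpr ⟨j⟩)]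
  ring

variable [DecidableEq m]

lemma tight_bound_mul_card (hdiag : ∀ j, (Xᴴ * X) j j = 1)
    (htight : X * Xᴴ = (β : ℂ) • 1) : β * Fintype.card m = Fintype.card n := by
  have h := trace_mul_comm X Xᴴ
  have hG : trace (Xᴴ * X) = Fintype.card n := by simp [trace, hdiag]
  rw [htight, trace_smul, trace_one, hG, smul_eq_mul] at h
  exact_mod_cast h

structure IsETFWith_s4 (X : Matrix m n ℂ) (a β : ℝ) : Prop where
  diag : ∀ j, (Xᴴ * X) j j = 1
  off_diag : ∀ j k, j ≠ k → ‖(Xᴴ * X) j k‖ = a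
  tight : X * Xᴴ = (β : ℂ) • 1

namespace IsETFWith_s4

lemma welch_bound_eq (hX : IsETFWith_s4 X a β) :
    Fintype.card n * (1 + ((Fintype.card n : ℝ) - 1) * a ^ 2) = β ^ 2 * Fintype.card m := by
  have htrace : trace ((Xᴴ * X) * (Xᴴ * X)) = trace ((X * Xᴴ) * (X * Xᴴ)) := by
    rw [Matrix.mul_assoc, trace_mul_comm]
    simp only [Matrix.mul_assoc]
  rw [trace_mul_self_of_isHermitian (isHermitian_conjTranspose_mul_self X), hX.tight,
    smul_mul_smul_comm, Matrix.one_mul, trace_smul, trace_one] at htrace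
  simp only [sum_norm_sq_gram_row hX.diag hX.off_diag, Finset.sum_const, Finset.card_univ,
    nsmul_eq_mul] at htrace
  apply Complex.ofReal_injective
  rw [htrace]
  push_cast
  ring

/-- Rescaling the columns by unimodular phases makes the `j₀`-th row of the Gram matrix
nonnegative, and a unitary change of coordinates then maps the `j₀`-th column to `e_{i₀}`. -/
lemma exists_normalized [DecidableEq n] (hX : IsETFWith_s4 X a β) (ha : a ≠ 0) (i₀ : m) (j₀ : n) :
    ∃ Z : Matrix m n ℂ, IsETFWith_s4 Z a β ∧ (∀ i, Z i j₀ = (Pi.single i₀ 1 : m → ℂ) i) ∧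
      ∀ k, k ≠ j₀ → Z i₀ k = a := by
  set G := Xᴴ * X
  have hdiag : ∀ j, G j j = 1 := hX.diag
  have hne : ∀ k, G j₀ k ≠ 0 := fun k => by
    rcases eq_or_ne k j₀ with rfl | hk
    · exact (hdiag k).symm ▸ one_ne_zero
    · exact norm_ne_zero_iff.mp ((hX.off_diag j₀ k hk.symm).symm ▸ ha)
  set c : n → ℂ := fun k => ‖G j₀ k‖ / G j₀ k
  have hc : ∀ k, ‖c k‖ = 1 := fun k => by simp [c, hne k]
  have hcj₀ : c j₀ = 1 := by simp [c, hdiag j₀]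
  obtain ⟨U, hU, hUx⟩ := exists_mem_unitaryGroup_mulVec_eq_single i₀ (x := fun i => X i j₀)
    (by simpa [G, mul_apply, dotProduct] using hX.diag j₀)
  have hgram : ∀ j k, ((U * X * diagonal c)ᴴ * (U * X * diagonal c)) j k
      = star (c j) * G j k * c k := by
    intro j k
    rw [conjTranspose_mul_self_of_mem_unitaryGroup hU, diagonal_conjTranspose, mul_diagonal,
      diagonal_mul]
    rfl
  have hnorm : ∀ j k, ‖((U * X * diagonal c)ᴴ * (U * X * diagonal c)) j k‖ = ‖G j k‖ :=
    fun j k => by rw [hgram, norm_mul, norm_mul, norm_star, hc, hc, one_mul, mul_one]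
  have hcol : ∀ i, (U * X * diagonal c) i j₀ = (Pi.single i₀ 1 : m → ℂ) i := by
    intro i
    rw [mul_diagonal, hcj₀, mul_one, ← hUx]
    rfl
  refine ⟨U * X * diagonal c, ⟨fun j => ?_, fun j k hjk => ?_, ?_⟩, hcol, fun k hk => ?_⟩
  · rw [hgram, hdiag, mul_one, mul_comm, RCLike.star_def, RCLike.mul_conj, hc]
    simp
  · rw [hnorm, hX.off_diag j k hjk]
  · rw [mul_conjTranspose_self_of_mem_unitaryGroup U X (diagonal_mem_unitaryGroup hc), hX.tight,
      Matrix.mul_smul, Matrix.mul_one, Matrix.smul_mul, ← star_eq_conjTranspose,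
      mem_unitaryGroup_iff.mp hU]
  · rw [← conjTranspose_mul_self_apply_of_col_eq_single hcol, hgram, hcj₀, star_one, one_mul,
      mul_div_cancel₀ _ (hne k), hX.off_diag j₀ k hk.symm]

end IsETFWith_s4

end Gram

section Arithmetic

lemma sq_eq_of_welch_bound_eq {a β d n : ℝ} (hd : d ≠ 0) (hn : n ≠ 0) (hn1 : n ≠ 1)
    (hβ : β * d = n) (hwelch : n * (1 + (n - 1) * a ^ 2) = β ^ 2 * d) :
    a ^ 2 = (n - d) / (d * (n - 1)) := by
  rw [eq_div_iff (mul_ne_zero hd (sub_ne_zero.2 hn1))]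
  apply mul_left_cancel₀ hn
  linear_combination d * hwelch + (β * d + n) * hβ

lemma one_sub_sq_pos_of_sq_eq {a d n : ℝ} (hd : 1 < d) (hdn : d < n)
    (ha : a ^ 2 = (n - d) / (d * (n - 1))) : 0 < 1 - a ^ 2 := by
  rw [ha, sub_pos, div_lt_one (by nlinarith)]
  nlinarith

lemma tight_bound_eq_of_sq_eq {a β d n : ℝ} (hd : d ≠ 0) (hd1 : d ≠ 1) (hn1 : n ≠ 1)
    (hβ : β * d = n) (ha : a ^ 2 = (n - d) / (d * (n - 1))) :
    β = (1 - a ^ 2) * (n - 1) / (d - 1) := by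
  have hd1' : d - 1 ≠ 0 := sub_ne_zero.2 hd1
  have hn1' : n - 1 ≠ 0 := sub_ne_zero.2 hn1
  rw [ha]
  field_simp
  linear_combination (d - 1) * hβ

end Arithmetic

section Rescaling

variable {m n : Type*} {r : ℝ}

lemma inv_sqrt_smul_conjTranspose_mul_self [Fintype m] (hr : 0 ≤ r) (W : Matrix m n ℂ) :
    ((((√r)⁻¹ : ℝ) : ℂ) • W)ᴴ * ((((√r)⁻¹ : ℝ) : ℂ) • W) = ((r⁻¹ : ℝ) : ℂ) • (Wᴴ * W) := by
  rw [conjTranspose_smul, Matrix.smul_mul, Matrix.mul_smul, smul_smul, Complex.star_def,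
    Complex.conj_ofReal, ← Complex.ofReal_mul, ← mul_inv, Real.mul_self_sqrt hr]

lemma inv_sqrt_smul_mul_conjTranspose_self [Fintype n] (hr : 0 ≤ r) (W : Matrix m n ℂ) :
    ((((√r)⁻¹ : ℝ) : ℂ) • W) * ((((√r)⁻¹ : ℝ) : ℂ) • W)ᴴ = ((r⁻¹ : ℝ) : ℂ) • (W * Wᴴ) := by
  rw [conjTranspose_smul, Matrix.smul_mul, Matrix.mul_smul, smul_smul, Complex.star_def,
    Complex.conj_ofReal, ← Complex.ofReal_mul, ← mul_inv, Real.mul_self_sqrt hr]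

lemma isUNTF_inv_sqrt_smul {d n : ℕ} {W : Matrix (Fin d) (Fin n) ℂ} (hr : 0 < r)
    (hcols : ∀ j, (Wᴴ * W) j j = r) (htight : W * Wᴴ = ((r * n / d : ℝ) : ℂ) • 1) :
    IsUNTF ((((√r)⁻¹ : ℝ) : ℂ) • W) := by
  refine ⟨fun j => ?_, ?_⟩
  · have h := congr_fun₂ (inv_sqrt_smul_conjTranspose_mul_self hr.le W) j j
    rw [conjTranspose_mul_self_apply_self, Matrix.smul_apply, hcols, smul_eq_mul,
      ← Complex.ofReal_mul, inv_mul_cancel₀ hr.ne'] at h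
    exact_mod_cast h
  · rw [inv_sqrt_smul_mul_conjTranspose_self hr.le, htight, smul_smul, ← Complex.ofReal_mul]
    congr 2
    field_simp

end Rescaling

section Deflation

variable {d n : ℕ} {Z : Matrix (Fin (d + 1)) (Fin (n + 1)) ℂ} {a : ℝ}

lemma submatrix_succ_mul_conjTranspose_self {β : ℝ}
    (hcol : ∀ i, Z i 0 = (Pi.single 0 1 : Fin (d + 1) → ℂ) i) (htight : Z * Zᴴ = (β : ℂ) • 1) :
    Z.submatrix Fin.succ Fin.succ * (Z.submatrix Fin.succ Fin.succ)ᴴ = (β : ℂ) • 1 := by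
  ext i i'
  have h := congr_fun₂ htight i.succ i'.succ
  simp [mul_apply, Fin.sum_univ_succ, hcol, one_apply] at h ⊢
  exact h

lemma conjTranspose_mul_self_apply_succ_succ (hrow : ∀ k : Fin n, Z 0 k.succ = a) (j k : Fin n) :
    (Zᴴ * Z) j.succ k.succ =
      a ^ 2 + ((Z.submatrix Fin.succ Fin.succ)ᴴ * Z.submatrix Fin.succ Fin.succ) j k := by
  simp [mul_apply, Fin.sum_univ_succ, hrow, sq]

lemma submatrix_succ_mulVec_one {β : ℝ} (ha : a ≠ 0)
    (hcol : ∀ i, Z i 0 = (Pi.single 0 1 : Fin (d + 1) → ℂ) i) (hrow : ∀ k : Fin n, Z 0 k.succ = a)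
    (htight : Z * Zᴴ = (β : ℂ) • 1) :
    Z.submatrix Fin.succ Fin.succ *ᵥ (fun _ => 1) = 0 := by
  ext i
  have h := congr_fun₂ htight i.succ 0
  simp [mul_apply, Fin.sum_univ_succ, hcol, hrow, Fin.succ_ne_zero] at h
  rw [← Finset.sum_mul, mul_eq_zero] at h
  simpa [mulVec, dotProduct] using h.resolve_right (mod_cast ha)

theorem IsETFWith_s4.exists_isUNTF_of_normalized {β : ℝ} (hZ : IsETFWith_s4 Z a β) (ha : a ≠ 0)
    (hcol : ∀ i, Z i 0 = (Pi.single 0 1 : Fin (d + 1) → ℂ) i) (hrow : ∀ k : Fin n, Z 0 k.succ = a)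
    (hr : 0 < 1 - a ^ 2) (hβ : β = (1 - a ^ 2) * n / d) :
    ∃ Y : Matrix (Fin d) (Fin n) ℂ, IsUNTF Y ∧ Y *ᵥ (fun _ => 1) = 0 ∧
      ∀ j k, j ≠ k → ‖(a : ℂ) ^ 2 + (1 - (a : ℂ) ^ 2) * (Yᴴ * Y) j k‖ = a := by
  have hgram := conjTranspose_mul_self_apply_succ_succ hrow
  refine ⟨(((√(1 - a ^ 2))⁻¹ : ℝ) : ℂ) • Z.submatrix Fin.succ Fin.succ,
    isUNTF_inv_sqrt_smul hr (fun j => ?_) ?_, ?_, fun j k hjk => ?_⟩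
  · push_cast
    linear_combination hZ.diag j.succ - hgram j j
  · rw [submatrix_succ_mul_conjTranspose_self hcol hZ.tight, hβ]
  · rw [smul_mulVec, submatrix_succ_mulVec_one ha hcol hrow hZ.tight, smul_zero]
  · have hr' : (1 - (a : ℂ) ^ 2) * (((1 - a ^ 2)⁻¹ : ℝ) : ℂ) = 1 := by
      push_cast
      exact mul_inv_cancel₀ (mod_cast hr.ne')
    rw [inv_sqrt_smul_conjTranspose_mul_self hr.le, Matrix.smul_apply, smul_eq_mul,
      ← mul_assoc, hr', one_mul, ← hgram, hZ.off_diag _ _ (Fin.succ_inj.not.mpr hjk)]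

end Deflation

/-- Let `X` be a complex `d × n` equiangular tight frame with `d ≥ 2` and `n > d`, and let
`α = √((n − d)/(d(n − 1)))`. Then there exists `Y ∈ ℂ^{(d−1)×(n−1)}` which is a
`(d−1) × (n−1)` unit norm tight frame with `Y𝟙 = 0`, and every off-diagonal entry `z` of
`YᴴY` satisfies `|α² + (1 − α²)z| = α`. -/
theorem etf_reduction {d n : ℕ} (hd : 2 ≤ d) (hn : d < n)
    (X : Matrix (Fin d) (Fin n) ℂ) (hX : IsETF X)
    (α : ℝ) (hα : α = Real.sqrt (((n : ℝ) - d) / (d * ((n : ℝ) - 1)))) :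
    ∃ Y : Matrix (Fin (d - 1)) (Fin (n - 1)) ℂ,
      IsUNTF Y ∧
      Y.mulVec (fun _ => 1) = 0 ∧
      ∀ j k, j ≠ k →
        ‖((α : ℂ) ^ 2 + (1 - (α : ℂ) ^ 2) * (Yᴴ * Y) j k)‖ = α := by
  obtain ⟨a, β, ha, -, hdiag, hoff, htight⟩ := hX
  have hX : IsETFWith_s4 X a β := ⟨hdiag, hoff, htight⟩
  have hβ := tight_bound_mul_card hdiag htight
  have hwelch := hX.welch_bound_eq
  simp only [Fintype.card_fin] at hβ hwelch
  have hd1 : (1 : ℝ) < d := by exact_mod_cast hd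
  have hdn : (d : ℝ) < n := by exact_mod_cast hn
  have ha2 := sq_eq_of_welch_bound_eq (by linarith) (by linarith) (by linarith) hβ hwelch
  obtain rfl : a = α := by rw [hα, ← ha2, Real.sqrt_sq ha.le]
  have hr := one_sub_sq_pos_of_sq_eq hd1 hdn ha2
  have hβ' := tight_bound_eq_of_sq_eq (by linarith) (by linarith) (by linarith) hβ ha2
  obtain ⟨d, rfl⟩ : ∃ d', d = d' + 1 := ⟨d - 1, by omega⟩
  obtain ⟨n, rfl⟩ : ∃ n', n = n' + 1 := ⟨n - 1, by omega⟩
  obtain ⟨Z, hZ, hcol, hrow⟩ := hX.exists_normalized ha.ne' 0 0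
  refine hZ.exists_isUNTF_of_normalized ha.ne' hcol (fun k => hrow _ (Fin.succ_ne_zero k)) hr ?_
  rw [hβ']
  push_cast
  ring
end

section
/- Let K and R be real symmetric m×m matrices and γ > 0 such that R𝟙 = 0 and K + 2γR − γJ = (γ + 1)I, where J is the all-ones matrix. Then ker(K) = ker(R − μI), where μ = (γ + 1)/(2γ). -/
/-!
Since `2γμ = γ + 1`, the identity reads `K = -2γ (R - μI) + γJ`. Symmetry and `R𝟙 = 0` give
`𝟙ᵀ(R - μI) = -μ𝟙ᵀ`, hence `𝟙ᵀK = (γ + 1 + mγ)𝟙ᵀ`. As both factors are nonzero, every vector in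
the kernel of `R - μI` or of `K` has coordinate sum zero, and on such vectors `J` acts as zero.
-/

open Matrix

namespace Matrix

variable {m n α : Type*} [Fintype n] [CommRing α]

theorem of_one_mulVec (x : n → α) :
    of (fun (_ : m) (_ : n) => (1 : α)) *ᵥ x = (∑ i, x i) • 1 := by
  ext; simp [mulVec, dotProduct]

theorem one_vecMul_eq_zero_of_isSymm {R : Matrix n n α} (hR : R.IsSymm) (hones : R *ᵥ 1 = 0) :
    (1 : n → α) ᵥ* R = 0 := by
  rw [← hR.eq, vecMul_transpose, hones]

theorem ker_smul_add_smul_of_one_mulVecLin [NoZeroDivisors α] (A : Matrix n n α) {a b c : α}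
    (hA : (1 : n → α) ᵥ* A = c • 1) (ha : a ≠ 0) (hc : c ≠ 0)
    (habc : a * c + b * Fintype.card n ≠ 0) :
    LinearMap.ker (a • A + b • of fun _ _ => (1 : α)).mulVecLin = LinearMap.ker A.mulVecLin := by
  have sum_mulVec (x : n → α) : 1 ⬝ᵥ (A *ᵥ x) = c * (1 ⬝ᵥ x) := by
    rw [dotProduct_mulVec, hA, smul_dotProduct, smul_eq_mul]
  ext x
  simp only [LinearMap.mem_ker, mulVecLin_apply, add_mulVec, smul_mulVec, of_one_mulVec,
    ← one_dotProduct]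
  constructor
  · intro h
    have hsum : 1 ⬝ᵥ x = 0 := by
      have h1 := congrArg (1 ⬝ᵥ ·) h
      simp only [dotProduct_add, dotProduct_smul, sum_mulVec, one_dotProduct_one, smul_eq_mul,
        dotProduct_zero] at h1
      refine (mul_eq_zero.mp ?_).resolve_left habc
      linear_combination h1
    rw [hsum, zero_smul, smul_zero, add_zero] at h
    exact (smul_eq_zero.mp h).resolve_left ha
  · intro h
    have hsum : 1 ⬝ᵥ x = 0 := by
      simpa [h, hc] using sum_mulVec x
    rw [h, hsum, zero_smul, smul_zero, smul_zero, add_zero]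

end Matrix

theorem ker_K_eq_ker_R_shift_general {m : ℕ} (K R : Matrix (Fin m) (Fin m) ℝ)
    (hR : R.IsSymm) (γ : ℝ) (hγ : 0 < γ)
    (hones : R.mulVec (fun _ => 1) = 0)
    (hid : K + (2 * γ) • R - γ • (Matrix.of fun _ _ => (1 : ℝ))
      = (γ + 1) • (1 : Matrix (Fin m) (Fin m) ℝ))
    (μ : ℝ) (hμ : μ = (γ + 1) / (2 * γ)) :
    LinearMap.ker K.mulVecLin
      = LinearMap.ker (R - μ • (1 : Matrix (Fin m) (Fin m) ℝ)).mulVecLin := by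
  have hμγ : 2 * γ * μ = γ + 1 := by rw [hμ]; field_simp
  have hK : K = (-(2 * γ)) • (R - μ • 1) + γ • of fun _ _ => (1 : ℝ) := by
    rw [smul_sub, smul_smul, neg_mul, hμγ, neg_smul, neg_smul, ← hid]
    abel
  have hones_left : (1 : Fin m → ℝ) ᵥ* (R - μ • 1) = (-μ) • 1 := by
    rw [vecMul_sub, vecMul_smul, vecMul_one, one_vecMul_eq_zero_of_isSymm hR hones, zero_sub,
      neg_smul]
  have hμ_pos : 0 < μ := by rw [hμ]; positivity
  rw [hK]
  refine ker_smul_add_smul_of_one_mulVecLin _ hones_left (by linarith) (by linarith) ?_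
  nlinarith [m.cast_nonneg (α := ℝ)]

/-- Let `K` and `R` be real symmetric `m × m` matrices and `γ > 0` such that `R𝟙 = 0` and
`K + 2γR − γJ = (γ + 1)I`, where `J` is the all-ones matrix. Then
`ker K = ker (R − μI)` where `μ = (γ + 1)/(2γ)`. -/
theorem ker_K_eq_ker_R_shift {m : ℕ} (K R : Matrix (Fin m) (Fin m) ℝ)
    (hK : K.IsSymm) (hR : R.IsSymm) (γ : ℝ) (hγ : 0 < γ)
    (hones : R.mulVec (fun _ => 1) = 0)
    (hid : K + (2 * γ) • R - γ • (Matrix.of fun _ _ => (1 : ℝ))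
      = (γ + 1) • (1 : Matrix (Fin m) (Fin m) ℝ))
    (μ : ℝ) (hμ : μ = (γ + 1) / (2 * γ)) :
    LinearMap.ker K.mulVecLin
      = LinearMap.ker (R - μ • (1 : Matrix (Fin m) (Fin m) ℝ)).mulVecLin :=
  ker_K_eq_ker_R_shift_general K R hR γ hγ hones hid μ hμ
end

section
/- Let P be a complex m×m matrix with P² = P, and write P = A + iB where A and B are real m×m matrices. For each λ ∈ (0, 1), multiplication by B defines a linear bijection from ker(A − λI) to ker(A − (1 − λ)I). -/
/-!
Comparing real and imaginary parts in `P * P = P` gives `A² - B² = A` and `AB + BA = B`.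
The second identity shows that `B` maps the `λ`-eigenspace of `A` into the `(1 - λ)`-eigenspace,
and the first that `B²` acts on the `λ`-eigenspace as multiplication by `λ(λ - 1)`, a value
shared by `λ` and `1 - λ`. For `λ ∉ {0, 1}` this scalar is invertible, so
`(λ(λ - 1))⁻¹ B` inverts `B` between the two eigenspaces.
-/

open Matrix

section ReIm

variable {l m n : Type*}

theorem Matrix.map_re_mul [Fintype m] (P : Matrix l m ℂ) (Q : Matrix m n ℂ) :
    (P * Q).map Complex.re =
      P.map Complex.re * Q.map Complex.re - P.map Complex.im * Q.map Complex.im := by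
  ext i j
  simp [mul_apply, Complex.re_sum, Finset.sum_sub_distrib]

theorem Matrix.map_im_mul [Fintype m] (P : Matrix l m ℂ) (Q : Matrix m n ℂ) :
    (P * Q).map Complex.im =
      P.map Complex.re * Q.map Complex.im + P.map Complex.im * Q.map Complex.re := by
  ext i j
  simp [mul_apply, Complex.im_sum, Finset.sum_add_distrib]

theorem Matrix.map_re_ofReal_add_I_smul (A B : Matrix m n ℝ) :
    (A.map Complex.ofReal + Complex.I • B.map Complex.ofReal).map Complex.re = A := by
  ext i j
  simp

theorem Matrix.map_im_ofReal_add_I_smul (A B : Matrix m n ℝ) :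
    (A.map Complex.ofReal + Complex.I • B.map Complex.ofReal).map Complex.im = B := by
  ext i j
  simp

end ReIm

theorem Matrix.ker_mulVecLin_sub_smul_one {R n : Type*} [CommRing R] [Fintype n] [DecidableEq n]
    (A : Matrix n n R) (μ : R) :
    LinearMap.ker (A - μ • (1 : Matrix n n R)).mulVecLin =
      Module.End.eigenspace A.mulVecLin μ := by
  rw [Module.End.eigenspace_def]
  simp [Module.End.one_eq_id]

namespace Module.End

variable {K V : Type*} [Field K] [AddCommGroup V] [Module K V] {f g : Module.End K V}

theorem apply_mem_eigenspace_one_sub_of_anticomm (hanti : f * g + g * f = g) {μ : K} {x : V}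
    (hx : x ∈ f.eigenspace μ) : g x ∈ f.eigenspace (1 - μ) := by
  rw [mem_eigenspace_iff] at hx ⊢
  have := congr($hanti x)
  simp only [LinearMap.add_apply, mul_apply, hx, map_smul] at this
  rw [sub_smul, one_smul, eq_sub_iff_add_eq]
  exact this

theorem apply_apply_of_mem_eigenspace (hsq : f * f - g * g = f) {μ : K} {x : V}
    (hx : x ∈ f.eigenspace μ) : g (g x) = (μ * (μ - 1)) • x := by
  rw [mem_eigenspace_iff] at hx
  have := congr($hsq x)
  simp only [LinearMap.sub_apply, mul_apply, hx, map_smul, smul_smul] at this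
  rw [mul_sub, mul_one, sub_smul, ← this, sub_sub_cancel]

theorem exists_linearEquiv_eigenspace_one_sub (hsq : f * f - g * g = f)
    (hanti : f * g + g * f = g) {μ : K} (hμ0 : μ ≠ 0) (hμ1 : μ ≠ 1) :
    ∃ e : f.eigenspace μ ≃ₗ[K] f.eigenspace (1 - μ), ∀ x, (e x : V) = g x := by
  have hc : μ * (μ - 1) ≠ 0 := mul_ne_zero hμ0 (sub_ne_zero.mpr hμ1)
  have hc' : (1 - μ) * (1 - μ - 1) = μ * (μ - 1) := by ring
  have hback : ∀ x ∈ f.eigenspace (1 - μ), g x ∈ f.eigenspace μ := fun x hx ↦ by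
    simpa only [sub_sub_cancel] using apply_mem_eigenspace_one_sub_of_anticomm hanti hx
  refine ⟨.ofLinearMap (g.restrict fun _ ↦ apply_mem_eigenspace_one_sub_of_anticomm hanti)
    ((μ * (μ - 1))⁻¹ • g.restrict hback) ?_ ?_, fun _ ↦ rfl⟩
  · ext ⟨x, hx⟩
    simp only [LinearMap.comp_apply, LinearMap.smul_apply, LinearMap.restrict_apply,
      LinearMap.id_apply, Submodule.coe_smul, map_smul]
    rw [apply_apply_of_mem_eigenspace hsq hx, hc', smul_smul, inv_mul_cancel₀ hc, one_smul]
  · ext ⟨x, hx⟩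
    simp only [LinearMap.comp_apply, LinearMap.smul_apply, LinearMap.restrict_apply,
      LinearMap.id_apply, Submodule.coe_smul]
    rw [apply_apply_of_mem_eigenspace hsq hx, smul_smul, inv_mul_cancel₀ hc, one_smul]

end Module.End

/-- Let `P` be a complex `m × m` matrix with `P² = P`, and write `P = A + iB` with `A, B`
real. For each `λ ∈ (0, 1)`, multiplication by `B` defines a linear bijection from
`ker(A − λI)` to `ker(A − (1 − λ)I)`. -/
theorem ker_bijection {m : ℕ} (P : Matrix (Fin m) (Fin m) ℂ) (hP : P * P = P)
    (A B : Matrix (Fin m) (Fin m) ℝ)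
    (hAB : P = A.map (Complex.ofReal) + Complex.I • B.map (Complex.ofReal))
    (lam : ℝ) (hlam0 : 0 < lam) (hlam1 : lam < 1) :
    ∃ e : LinearMap.ker (A - lam • (1 : Matrix (Fin m) (Fin m) ℝ)).mulVecLin ≃ₗ[ℝ]
        LinearMap.ker (A - (1 - lam) • (1 : Matrix (Fin m) (Fin m) ℝ)).mulVecLin,
      ∀ x, (e x : Fin m → ℝ) = B.mulVec (x : Fin m → ℝ) := by
  have hre : P.map Complex.re = A := hAB ▸ map_re_ofReal_add_I_smul A B
  have him : P.map Complex.im = B := hAB ▸ map_im_ofReal_add_I_smul A B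
  have hsq : A * A - B * B = A := by rw [← hre, ← him, ← map_re_mul, hP]
  have hanti : A * B + B * A = B := by rw [← hre, ← him, ← map_im_mul, hP]
  rw [ker_mulVecLin_sub_smul_one, ker_mulVecLin_sub_smul_one]
  exact Module.End.exists_linearEquiv_eigenspace_one_sub
    (by simpa [mulVecLin_mul, Module.End.mul_eq_comp] using congrArg mulVecLin hsq)
    (by simpa [mulVecLin_mul, Module.End.mul_eq_comp] using congrArg mulVecLin hanti)
    hlam0.ne' hlam1.ne
end

section
/- Let P be a complex m×m matrix with P² = P, and write P = A + iB where A and B are real m×m matrices. For any λ ∈ ℝ and any real vector x with Ax = λx, the vector Bx satisfies A(Bx) = (1 − λ)(Bx). -/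
open Matrix

/-- Let `P` be a complex `m × m` matrix with `P² = P`, and write `P = A + iB` with `A, B`
real. For any `λ ∈ ℝ` and any real vector `x` with `Ax = λx`, we have
`A(Bx) = (1 − λ)(Bx)`. -/
theorem B_maps_eigenvectors {m : ℕ}
    (P : Matrix (Fin m) (Fin m) ℂ) (hP : P * P = P)
    (A B : Matrix (Fin m) (Fin m) ℝ)
    (hAB : P = A.map (Complex.ofReal) + Complex.I • B.map (Complex.ofReal))
    (lam : ℝ) (x : Fin m → ℝ) (hx : A.mulVec x = lam • x) :
    A.mulVec (B.mulVec x) = (1 - lam) • B.mulVec x := by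
  have φ := Complex.ofRealHom
  have hmap : ∀ (X Y : Matrix (Fin m) (Fin m) ℝ),
      (X.map Complex.ofReal) * (Y.map Complex.ofReal) = (X * Y).map Complex.ofReal := by
    intro X Y
    exact (Matrix.map_mul (f := Complex.ofRealHom)).symm
  have key : A * B + B * A = B := by
    have h : ((A*A - B*B).map (Complex.ofReal)) + Complex.I • ((A*B + B*A).map Complex.ofReal)
        = A.map Complex.ofReal + Complex.I • B.map Complex.ofReal := by
      rw [← hAB, ← hP, hAB]
      rw [add_mul, mul_add, mul_add]
      simp only [smul_mul_assoc, mul_smul_comm, smul_smul, Complex.I_mul_I, hmap]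
      ext i j
      simp [Matrix.add_apply, Matrix.smul_apply, Matrix.map_apply, Matrix.sub_apply, Matrix.neg_apply]
      ring
    ext i j
    have h2 := congrFun (congrFun (congrArg Matrix.of.symm h) i) j
    have := congrArg Complex.im h2
    simpa using this
  have : A.mulVec (B.mulVec x) = (A * B).mulVec x := Matrix.mulVec_mulVec _ _ _
  rw [this]
  have hBA : (B * A).mulVec x = lam • B.mulVec x := by
    rw [← Matrix.mulVec_mulVec, hx, Matrix.mulVec_smul]
  have : (A*B) = B - B*A := eq_sub_of_add_eq key
  rw [this, Matrix.sub_mulVec, hBA, sub_smul, one_smul]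
end

section
/- Let P be a complex Hermitian m×m matrix with P² = P, write P = A + iB where A and B are real m×m matrices, and let λ ∈ (1/2, 1). Then rank(A) ≥ 2·dim ker(A − λI); indeed ker(A − λI) and ker(A − (1 − λ)I) are orthogonal subspaces of the column space of A having equal dimension. -/
open Matrix

lemma decomp_unique' {m : ℕ} {X Y X' Y' : Matrix (Fin m) (Fin m) ℝ}
    (h : X.map (Complex.ofReal) + Complex.I • Y.map Complex.ofReal
       = X'.map Complex.ofReal + Complex.I • Y'.map Complex.ofReal) :
    X = X' ∧ Y = Y' := by
  have h' : ∀ i j, X i j = X' i j ∧ Y i j = Y' i j := by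
    intro i j
    have := congrFun (congrFun h i) j
    simp only [Matrix.add_apply, Matrix.smul_apply, Matrix.map_apply, smul_eq_mul,
      Complex.ext_iff, Complex.add_re, Complex.add_im, Complex.ofReal_re, Complex.ofReal_im,
      Complex.mul_re, Complex.mul_im, Complex.I_re, Complex.I_im] at this
    constructor <;> linarith [this.1, this.2]
  exact ⟨by ext i j; exact (h' i j).1, by ext i j; exact (h' i j).2⟩

/-- Let `P` be a complex Hermitian `m × m` matrix with `P² = P`, write `P = A + iB` with
`A, B` real, and let `λ ∈ (1/2, 1)`. Then `rank(A) ≥ 2·dim ker(A − λI)`; indeed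
`ker(A − λI)` and `ker(A − (1 − λ)I)` are orthogonal subspaces of the column space of `A`
having equal dimension. -/
theorem rank_lower_bound {m : ℕ}
    (P : Matrix (Fin m) (Fin m) ℂ) (hherm : P.IsHermitian) (hP : P * P = P)
    (A B : Matrix (Fin m) (Fin m) ℝ)
    (hAB : P = A.map (Complex.ofReal) + Complex.I • B.map (Complex.ofReal))
    (lam : ℝ) (hlam0 : 1 / 2 < lam) (hlam1 : lam < 1) :
    2 * Module.finrank ℝ
        (LinearMap.ker (A - lam • (1 : Matrix (Fin m) (Fin m) ℝ)).mulVecLin) ≤ A.rank ∧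
      (∀ x ∈ LinearMap.ker (A - lam • (1 : Matrix (Fin m) (Fin m) ℝ)).mulVecLin,
        ∀ y ∈ LinearMap.ker (A - (1 - lam) • (1 : Matrix (Fin m) (Fin m) ℝ)).mulVecLin,
          x ⬝ᵥ y = 0) ∧
      LinearMap.ker (A - lam • (1 : Matrix (Fin m) (Fin m) ℝ)).mulVecLin
        ≤ LinearMap.range A.mulVecLin ∧
      LinearMap.ker (A - (1 - lam) • (1 : Matrix (Fin m) (Fin m) ℝ)).mulVecLin
        ≤ LinearMap.range A.mulVecLin ∧
      Module.finrank ℝ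
          (LinearMap.ker (A - lam • (1 : Matrix (Fin m) (Fin m) ℝ)).mulVecLin)
        = Module.finrank ℝ
          (LinearMap.ker (A - (1 - lam) • (1 : Matrix (Fin m) (Fin m) ℝ)).mulVecLin) := by
  -- extract the real relations
  have hcast : ∀ (X : Matrix (Fin m) (Fin m) ℝ),
      X.map Complex.ofReal = (Complex.ofRealHom.mapMatrix : Matrix (Fin m) (Fin m) ℝ →+* _) X :=
    fun _ => rfl
  have hPsym : (Aᵀ).map Complex.ofReal + Complex.I • (-Bᵀ).map Complex.ofReal
      = A.map Complex.ofReal + Complex.I • B.map Complex.ofReal := by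
    rw [← hAB, ← hherm.eq, hAB]
    ext i j
    simp [Matrix.conjTranspose_apply, Complex.ext_iff]
  have hprod : (A*A - B*B).map Complex.ofReal + Complex.I • (A*B + B*A).map Complex.ofReal
      = A.map Complex.ofReal + Complex.I • B.map Complex.ofReal := by
    rw [← hAB, ← hP, hAB]
    simp only [hcast, map_sub, map_add, _root_.map_mul, add_mul, mul_add, Matrix.smul_mul,
      Matrix.mul_smul, smul_smul, Complex.I_mul_I, neg_smul, one_smul, smul_add]
    abel
  have hAsym : Aᵀ = A := (decomp_unique' hPsym).1
  have hAeq : A * A - B * B = A := (decomp_unique' hprod).1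
  have hBeq : A * B + B * A = B := (decomp_unique' hprod).2
  -- basic facts
  set K₁ := LinearMap.ker (A - lam • (1 : Matrix (Fin m) (Fin m) ℝ)).mulVecLin with hK₁
  set K₂ := LinearMap.ker (A - (1 - lam) • (1 : Matrix (Fin m) (Fin m) ℝ)).mulVecLin with hK₂
  have hmem : ∀ (μ : ℝ) (x : Fin m → ℝ),
      x ∈ LinearMap.ker (A - μ • (1 : Matrix (Fin m) (Fin m) ℝ)).mulVecLin
        ↔ A.mulVec x = μ • x := by
    intro μ x
    rw [LinearMap.mem_ker, Matrix.mulVecLin_apply, Matrix.sub_mulVec,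
      Matrix.smul_mulVec, Matrix.one_mulVec, sub_eq_zero]
  have hdot : ∀ x y : Fin m → ℝ, A.mulVec x ⬝ᵥ y = x ⬝ᵥ A.mulVec y := by
    intro x y
    rw [Matrix.dotProduct_mulVec, ← Matrix.mulVec_transpose, hAsym]
  -- orthogonality
  have horth : ∀ x ∈ K₁, ∀ y ∈ K₂, x ⬝ᵥ y = 0 := by
    intro x hx y hy
    have hx' := (hmem lam x).1 hx
    have hy' := (hmem (1 - lam) y).1 hy
    have h1 : lam * (x ⬝ᵥ y) = (1 - lam) * (x ⬝ᵥ y) := by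
      calc lam * (x ⬝ᵥ y) = (lam • x) ⬝ᵥ y := by
              rw [smul_dotProduct]; simp
        _ = A.mulVec x ⬝ᵥ y := by rw [hx']
        _ = x ⬝ᵥ A.mulVec y := hdot x y
        _ = x ⬝ᵥ ((1 - lam) • y) := by rw [hy']
        _ = (1 - lam) * (x ⬝ᵥ y) := by rw [dotProduct_smul]; simp
    have h2 : (2 * lam - 1) * (x ⬝ᵥ y) = 0 := by linarith [h1]
    have h3 : (2 * lam - 1) ≠ 0 := by linarith
    exact (mul_eq_zero.mp h2).resolve_left h3
  -- kernels inside range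
  have hrange : ∀ (μ : ℝ), μ ≠ 0 →
      LinearMap.ker (A - μ • (1 : Matrix (Fin m) (Fin m) ℝ)).mulVecLin
        ≤ LinearMap.range A.mulVecLin := by
    intro μ hμ x hx
    refine ⟨μ⁻¹ • x, ?_⟩
    rw [_root_.map_smul, Matrix.mulVecLin_apply, (hmem μ x).1 hx, smul_smul, inv_mul_cancel₀ hμ,
      one_smul]
  have hlamne : lam ≠ 0 := by intro h; rw [h] at hlam0; norm_num at hlam0
  have hlamne1 : (1 : ℝ) - lam ≠ 0 := by intro h; nlinarith
  -- B maps eigenspaces into each other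
  have hBB : B * B = A * A - A := by
    have h' : A * A = A + B * B := sub_eq_iff_eq_add.mp hAeq
    rw [h']; abel
  have hAB' : A * B = B - B * A := eq_sub_of_add_eq hBeq
  have hBmap : ∀ (μ : ℝ) (x : Fin m → ℝ), A.mulVec x = μ • x →
      A.mulVec (B.mulVec x) = (1 - μ) • B.mulVec x := by
    intro μ x hx
    rw [Matrix.mulVec_mulVec, hAB', Matrix.sub_mulVec, ← Matrix.mulVec_mulVec, hx,
      Matrix.mulVec_smul, sub_smul, one_smul]
  have hB2 : ∀ (μ : ℝ) (x : Fin m → ℝ), A.mulVec x = μ • x →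
      B.mulVec (B.mulVec x) = (μ * μ - μ) • x := by
    intro μ x hx
    rw [Matrix.mulVec_mulVec, hBB, Matrix.sub_mulVec, ← Matrix.mulVec_mulVec, hx,
      Matrix.mulVec_smul, hx, smul_smul, sub_smul]
  have hscal : ∀ μ : ℝ, μ ≠ 0 → μ ≠ 1 → μ * μ - μ ≠ 0 := by
    intro μ h0 h1 h
    have h' : μ * (μ - 1) = 0 := by nlinarith [h]
    rcases mul_eq_zero.mp h' with h'' | h''
    · exact h0 h''
    · exact h1 (by linarith)
  -- the two restricted maps
  have hBinto : ∀ (μ ν : ℝ), ν = 1 - μ → ∀ x ∈ LinearMap.ker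
        (A - μ • (1 : Matrix (Fin m) (Fin m) ℝ)).mulVecLin,
      B.mulVecLin x ∈ LinearMap.ker (A - ν • (1 : Matrix (Fin m) (Fin m) ℝ)).mulVecLin := by
    intro μ ν hν x hx
    rw [hmem, Matrix.mulVecLin_apply, hν]
    exact hBmap μ x ((hmem μ x).1 hx)
  have hinj : ∀ (μ ν : ℝ) (hν : ν = 1 - μ), μ ≠ 0 → μ ≠ 1 →
      Function.Injective (B.mulVecLin.restrict (hBinto μ ν hν)) := by
    intro μ ν hν h0 h1
    rw [← LinearMap.ker_eq_bot, eq_bot_iff]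
    rintro ⟨x, hx⟩ hz
    have hx' := (hmem μ x).1 hx
    have hz' : B.mulVec x = 0 := by
      have := congrArg Subtype.val (LinearMap.mem_ker.mp hz)
      simpa [LinearMap.restrict_apply] using this
    have h4 : (μ * μ - μ) • x = 0 := by
      rw [← hB2 μ x hx', hz', Matrix.mulVec_zero]
    have hx0 : x = 0 := by
      have := smul_eq_zero.mp h4
      exact this.resolve_left (hscal μ h0 h1)
    simp [hx0]
  have hlamne1' : lam ≠ 1 := by intro h; rw [h] at hlam1; norm_num at hlam1
  have h1lamne0 : (1 : ℝ) - lam ≠ 0 := hlamne1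
  have h1lamne1 : (1 : ℝ) - lam ≠ 1 := by intro h; apply hlamne; linarith
  have hle12 : Module.finrank ℝ K₁ ≤ Module.finrank ℝ K₂ :=
    LinearMap.finrank_le_finrank_of_injective (hinj lam (1 - lam) rfl hlamne hlamne1')
  have hle21 : Module.finrank ℝ K₂ ≤ Module.finrank ℝ K₁ :=
    LinearMap.finrank_le_finrank_of_injective
      (hinj (1 - lam) lam (by ring) h1lamne0 h1lamne1)
  have hdim : Module.finrank ℝ K₁ = Module.finrank ℝ K₂ := le_antisymm hle12 hle21
  -- rank bound
  have hdisj : K₁ ⊓ K₂ = ⊥ := by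
    rw [eq_bot_iff]
    intro x hx
    have h0 : x ⬝ᵥ x = 0 := horth x hx.1 x hx.2
    simpa using dotProduct_self_eq_zero.mp h0
  have hsup : K₁ ⊔ K₂ ≤ LinearMap.range A.mulVecLin :=
    sup_le (hrange lam hlamne) (hrange (1 - lam) h1lamne0)
  have hsumrank : Module.finrank ℝ (K₁ ⊔ K₂ : Submodule ℝ (Fin m → ℝ))
      = Module.finrank ℝ K₁ + Module.finrank ℝ K₂ := by
    have := Submodule.finrank_sup_add_finrank_inf_eq K₁ K₂
    rw [hdisj] at this
    simpa using this
  have hrank : 2 * Module.finrank ℝ K₁ ≤ A.rank := by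
    have h1 : Module.finrank ℝ (K₁ ⊔ K₂ : Submodule ℝ (Fin m → ℝ))
        ≤ Module.finrank ℝ (LinearMap.range A.mulVecLin) :=
      Submodule.finrank_mono hsup
    rw [hsumrank, ← hdim] at h1
    calc 2 * Module.finrank ℝ K₁ = Module.finrank ℝ K₁ + Module.finrank ℝ K₁ := by ring
      _ ≤ Module.finrank ℝ (LinearMap.range A.mulVecLin) := h1
      _ = A.rank := rfl
  exact ⟨hrank, horth, hrange lam hlamne, hrange (1 - lam) h1lamne0, hdim⟩
end
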